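/- Let R be a commutative ring, G a group, V an R-module with an R-linear G-action, and k, l ∈ ℕ. The canonical R-linear isomorphism ⨂_{a ∈ Fin k} (⨂_{b ∈ Fin l} V) ≅ ⨂_{(a,b) ∈ Fin k × Fin l} V is equivariant for the group (G ≀ Σ_l) ≀ Σ_k, where it acts on the left by the iterated wreath tensor-power action (with G ≀ Σ_l acting on each inner factor ⨂_{b ∈ Fin l} V) and on the right by restricting the wreath tensor-power action of G ≀ Σ(Fin k × Fin l) along the homomorphism Θ. (This is the paper's Lemma that the isomorphism (E^{⊠ l})^{⊠ k} ≅ E^{⊠ kl} is a map of (Σ_n ≀ Σ_l) ≀ Σ_k-objects, specialized to a point.) -/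

import Mathlib

open Equiv TensorProduct PiTensorProduct DirectSum

/-- The action of `Perm I` on `I → G` by `(σ • g) i = g (σ⁻¹ i)`. -/
def permAut (G : Type*) [Group G] (I : Type*) : Equiv.Perm I →* MulAut (I → G) where
  toFun σ :=
    { toFun := fun g => g ∘ σ.symm
      invFun := fun g => g ∘ σ
      left_inv := fun g => by funext i; simp
      right_inv := fun g => by funext i; simp
      map_mul' := fun g h => rfl }
  map_one' := by ext g i; rfl
  map_mul' := fun σ τ => by ext g i; rfl

/-- The wreath product `G ≀ Σ(I)`. -/
abbrev Wreath (G : Type*) [Group G] (I : Type*) :=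
  (I → G) ⋊[permAut G I] Equiv.Perm I

/-- The wreath tensor-power representation of `G ≀ Σ(I)` on `⨂ (i : I), V`:
the base `I → G` acts factorwise and `Perm I` permutes the tensor factors. -/
noncomputable def wreathRep (R : Type*) [CommRing R] {G : Type*} [Group G] (I : Type*)
    {V : Type*} [AddCommGroup V] [Module R V] (ρ : Representation R G V) :
    Representation R (Wreath G I) (⨂[R] _i : I, V) where
  toFun w :=
    (PiTensorProduct.map fun i => ρ (w.left i)).comp
      (PiTensorProduct.reindex R (fun _ : I => V) w.right).toLinearMap
  map_one' := by
    ext v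
    simp [Equiv.Perm.one_def]
  map_mul' := fun w₁ w₂ => by
    ext v
    simp [permAut, SemidirectProduct.mul_left, SemidirectProduct.mul_right,
      Equiv.Perm.mul_apply, Equiv.Perm.inv_def, Equiv.Perm.mul_def]

section Ind

variable (k : Type*) [CommRing k] {H G : Type*} [Group H] [Group G] (f : H →* G)
  (V : Type*) [AddCommGroup V] [Module k V] (ρ : Representation k H V)

/-- The submodule of relations defining the balanced tensor product
`MonoidAlgebra k G ⊗[MonoidAlgebra k H] V`. -/
noncomputable def indRel : Submodule k (MonoidAlgebra k G ⊗[k] V) :=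
  Submodule.span k {x | ∃ (a : MonoidAlgebra k G) (h : H) (v : V),
    x = (a * MonoidAlgebra.of k G (f h)) ⊗ₜ[k] v - a ⊗ₜ[k] (ρ h v)}

/-- The induced representation `Ind_H^G V = MonoidAlgebra k G ⊗_{MonoidAlgebra k H} V`,
realized as the quotient of `MonoidAlgebra k G ⊗[k] V` by the balancing relations. -/
abbrev Ind : Type _ := (MonoidAlgebra k G ⊗[k] V) ⧸ indRel k f V ρ

theorem indRel_le_comap (g : G) :
    indRel k f V ρ ≤ (indRel k f V ρ).comap
      (LinearMap.rTensor V (LinearMap.mulLeft k (MonoidAlgebra.of k G g))) := by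
  rw [indRel, Submodule.span_le]
  rintro x ⟨a, h, v, rfl⟩
  simp only [SetLike.mem_coe, Submodule.mem_comap, map_sub, LinearMap.rTensor_tmul,
    LinearMap.mulLeft_apply]
  rw [← mul_assoc]
  exact Submodule.subset_span ⟨MonoidAlgebra.of k G g * a, h, v, rfl⟩

/-- The `G`-action on `Ind_H^G V` by left multiplication on the first factor. -/
noncomputable def indRep : Representation k G (Ind k f V ρ) where
  toFun g := Submodule.mapQ _ _
      (LinearMap.rTensor V (LinearMap.mulLeft k (MonoidAlgebra.of k G g)))
      (indRel_le_comap k f V ρ g)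
  map_one' := by
    apply LinearMap.ext
    intro x
    induction x using Submodule.Quotient.induction_on with
    | _ y =>
      simp [Submodule.mapQ_apply, ← MonoidAlgebra.one_def, LinearMap.mulLeft_one]
  map_mul' := fun g₁ g₂ => by
    apply LinearMap.ext
    intro x
    induction x using Submodule.Quotient.induction_on with
    | _ y =>
      simp only [Submodule.mapQ_apply, _root_.map_mul, LinearMap.mulLeft_mul,
        LinearMap.rTensor_comp, LinearMap.comp_apply, Module.End.mul_apply]

end Ind

/-- The homomorphism `Θ : (G ≀ Σ_l) ≀ Σ_k → G ≀ Σ(Fin k × Fin l)`, sending `(w, σ)`,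
where `w a = (g_a, τ_a)`, to `(g', ρ)` with `g' (a, b) = g_a b` and
`ρ (a, b) = (σ a, τ_{σ a} b)`. -/
def Theta (G : Type*) [Group G] (k l : ℕ) :
    Wreath (Wreath G (Fin l)) (Fin k) →* Wreath G (Fin k × Fin l) where
  toFun w :=
    ⟨fun p => (w.left p.1).left p.2,
      { toFun := fun p => (w.right p.1, (w.left (w.right p.1)).right p.2)
        invFun := fun p => (w.right⁻¹ p.1, (w.left p.1).right⁻¹ p.2)
        left_inv := fun p => by simp
        right_inv := fun p => by simp }⟩
  map_one' := by
    ext p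
    · simp
    · simp
    · simp
  map_mul' := fun w₁ w₂ => by
    ext p
    all_goals
      simp only [SemidirectProduct.mul_left, SemidirectProduct.mul_right]
      simp [permAut, Equiv.Perm.mul_apply, Equiv.Perm.inv_def]

/-!
The flattening isomorphism is built by induction on `k`, splitting off the last outer factor.
Both sides of the equivariance are linear maps out of `⨂_a ⨂_b V`, so they agree as soon as they
agree on tensors of pure tensors; there the identity is exactly the defining formula of `Θ`.
-/

namespace PiTensorProduct

variable {R : Type*} [CommRing R] {V : Type*} [AddCommGroup V] [Module R V] {κ : Type*}

noncomputable def finProdEquiv :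
    (k : ℕ) → (⨂[R] _a : Fin k, ⨂[R] _b : κ, V) ≃ₗ[R] ⨂[R] _p : Fin k × κ, V
  | 0 => (isEmptyEquiv (Fin 0)).trans (isEmptyEquiv (Fin 0 × κ)).symm
  | k + 1 =>
    (reindex R _ finSumFinEquiv.symm).trans <|
      (tmulEquiv R _).symm.trans <|
      (TensorProduct.congr (finProdEquiv k) (subsingletonEquiv 0)).trans <|
      (tmulEquiv R V).trans <|
      reindex R _ <|
        (Equiv.sumCongr (Equiv.refl _) (Equiv.uniqueProd κ (Fin 1)).symm).trans <|
        (Equiv.sumProdDistrib _ _ _).symm.trans (Equiv.prodCongr finSumFinEquiv (Equiv.refl κ))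

@[simp]
theorem finProdEquiv_tprod_tprod (k : ℕ) (v : Fin k → κ → V) :
    finProdEquiv k (tprod R fun a => tprod R (v a)) = tprod R fun p : Fin k × κ => v p.1 p.2 := by
  induction k with
  | zero =>
    simp only [finProdEquiv, LinearEquiv.trans_apply, isEmptyEquiv_apply_tprod,
      LinearEquiv.symm_apply_eq]
  | succ k ih =>
    simp only [finProdEquiv, LinearEquiv.trans_apply, reindex_tprod, tmulEquiv_symm_apply,
      TensorProduct.congr_tmul, ih, subsingletonEquiv_apply_tprod, tmulEquiv_apply]
    congr 1
    ext ⟨a, b⟩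
    induction a using Fin.addCases <;> simp [Fin.fin_one_eq_zero]

end PiTensorProduct

theorem wreathRep_tprod {R : Type*} [CommRing R] {G : Type*} [Group G] (I : Type*)
    {V : Type*} [AddCommGroup V] [Module R V] (ρ : Representation R G V) (w : Wreath G I)
    (f : I → V) :
    wreathRep R I ρ w (PiTensorProduct.tprod R f) =
      PiTensorProduct.tprod R fun i => ρ (w.left i) (f (w.right.symm i)) := by
  simp [wreathRep]

section Theta

variable {G : Type*} [Group G] {k l : ℕ} (w : Wreath (Wreath G (Fin l)) (Fin k))

@[simp]
theorem Theta_left : (Theta G k l w).left = fun p => (w.left p.1).left p.2 := rfl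

@[simp]
theorem Theta_right_symm_apply (p : Fin k × Fin l) :
    (Theta G k l w).right.symm p = (w.right.symm p.1, (w.left p.1).right.symm p.2) := rfl

end Theta

theorem finProdEquiv_comp_wreathRep {R : Type*} [CommRing R] {G : Type*} [Group G]
    {V : Type*} [AddCommGroup V] [Module R V] (ρ : Representation R G V) {k l : ℕ}
    (w : Wreath (Wreath G (Fin l)) (Fin k)) :
    (finProdEquiv k).toLinearMap ∘ₗ wreathRep R (Fin k) (wreathRep R (Fin l) ρ) w =
      wreathRep R (Fin k × Fin l) ρ (Theta G k l w) ∘ₗ (finProdEquiv k).toLinearMap :=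
  ext_of_span_eq_top (g := fun _ => PiTensorProduct.tprod R) (fun _ => span_tprod_eq_top)
    fun v => by simp [wreathRep_tprod]

theorem statement8 (R : Type*) [CommRing R] (G : Type*) [Group G]
    (V : Type*) [AddCommGroup V] [Module R V] (ρ : Representation R G V) (k l : ℕ) :
    ∃ Φ : (⨂[R] _a : Fin k, ⨂[R] _b : Fin l, V) ≃ₗ[R] ⨂[R] _p : Fin k × Fin l, V,
      (∀ v : Fin k → Fin l → V,
        Φ (PiTensorProduct.tprod R fun a => PiTensorProduct.tprod R fun b => v a b) =
          PiTensorProduct.tprod R fun p : Fin k × Fin l => v p.1 p.2) ∧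
      ∀ (w : Wreath (Wreath G (Fin l)) (Fin k)) (x : ⨂[R] _a : Fin k, ⨂[R] _b : Fin l, V),
        Φ (wreathRep R (Fin k) (wreathRep R (Fin l) ρ) w x) =
          wreathRep R (Fin k × Fin l) ρ (Theta G k l w) (Φ x) :=
  ⟨finProdEquiv k, finProdEquiv_tprod_tprod k,
    fun w => LinearMap.congr_fun (finProdEquiv_comp_wreathRep ρ w)⟩
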